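/- For all integers m, n, r ≥ 0 and every integer k, in ℤ[q]: L_q^{(m+r)}(n,k) = Σ_{i=0}^{n} q^{m(2i+2r+m-1)} · [2m]_q^{⟨n-i⟩} · qbinom(n,i) · L_q^{(r)}(i,k). -/

import Mathlib

open Finset Polynomial

/-- The q-integer [n]_q = 1 + q + ⋯ + q^{n-1} in ℤ[q]. -/
noncomputable def qint (n : ℕ) : Polynomial ℤ := ∑ i ∈ range n, X ^ i

/-- The q-rising factorial [n]_q^{⟨m⟩} = ∏_{i=n}^{n+m-1} [i]_q. -/
noncomputable def qrise (n m : ℕ) : Polynomial ℤ := ∏ i ∈ range m, qint (n + i)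

/-- The q-binomial coefficient. -/
noncomputable def qbinom : ℕ → ℕ → Polynomial ℤ
  | _, 0 => 1
  | 0, _ + 1 => 0
  | n + 1, k + 1 => qbinom n k + X ^ (k + 1) * qbinom n (k + 1)

/-- The q-Lah numbers (natural-number index version). -/
noncomputable def qLahNat : ℕ → ℕ → Polynomial ℤ
  | 0, 0 => 1
  | 0, _ + 1 => 0
  | _ + 1, 0 => 0
  | n + 1, k + 1 => X ^ (n + k) * qLahNat n k + qint (n + k + 1) * qLahNat n (k + 1)

/-- The q-Lah numbers, vanishing for negative second index. -/
noncomputable def qLah (n : ℕ) (k : ℤ) : Polynomial ℤ :=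
  if 0 ≤ k then qLahNat n k.toNat else 0

/-- The q-r-Lah numbers. -/
noncomputable def qrLah (r n : ℕ) (k : ℤ) : Polynomial ℤ :=
  ∑ i ∈ range (n + 1), X ^ (r * (2 * i + r - 1)) * qrise (2 * r) (n - i) * qbinom n i *
    qLah i k

/-!
Write `qrLah r = A_r L` with the lower-triangular matrix `A_r(n, i) = qrLahCoeff r n i`. Since the
coefficient `q^{m(2i+2r+m-1)} [2m]^{⟨n-i⟩} qbinom(n, i)` on the right is `q^{2mr} A_m(n, i)`, the
theorem is the factorisation `A_{m+r} = q^{2mr} A_m A_r`. By q-trinomial revision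
`qbinom(n, i) qbinom(i, j) = qbinom(n, j) qbinom(n-j, i-j)`, its `(n, j)` entry is the
q-Chu–Vandermonde identity `[a+b]^{⟨N⟩} = Σ_s q^{as} [a]^{⟨N-s⟩} [b]^{⟨s⟩} qbinom(N, s)` with
`a = 2m`, `b = 2r`, `N = n - j`. The q-binomial identities are checked after multiplying by
q-factorials, which are nonzero in the domain `ℤ[q]`.
-/
lemma qint_add (a b : ℕ) : qint (a + b) = qint a + X ^ a * qint b := by
  simp [qint, sum_range_add, pow_add, mul_sum]

lemma qint_ne_zero {n : ℕ} (hn : n ≠ 0) : qint n ≠ 0 := fun h => by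
  simpa [qint, eval_finsetSum, hn] using congrArg (eval 1) h

lemma qrise_zero (n : ℕ) : qrise n 0 = 1 := prod_range_zero _

lemma qrise_succ (n m : ℕ) : qrise n (m + 1) = qrise n m * qint (n + m) :=
  prod_range_succ _ _

lemma qrise_one_ne_zero (n : ℕ) : qrise 1 n ≠ 0 :=
  prod_ne_zero_iff.mpr fun _ _ => qint_ne_zero (by omega)

lemma qbinom_zero_right (n : ℕ) : qbinom n 0 = 1 := by cases n <;> rfl

lemma qbinom_succ_succ (n k : ℕ) :
    qbinom (n + 1) (k + 1) = qbinom n k + X ^ (k + 1) * qbinom n (k + 1) := rfl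

lemma qbinom_eq_zero_of_lt : ∀ {n k : ℕ}, n < k → qbinom n k = 0
  | 0, _ + 1, _ => rfl
  | n + 1, k + 1, h => by
    rw [qbinom_succ_succ, qbinom_eq_zero_of_lt (by omega : n < k),
      qbinom_eq_zero_of_lt (by omega : n < k + 1), mul_zero, add_zero]

lemma qbinom_self : ∀ n : ℕ, qbinom n n = 1
  | 0 => rfl
  | n + 1 => by rw [qbinom_succ_succ, qbinom_self n, qbinom_eq_zero_of_lt n.lt_succ_self]; ring

/-- `qrise 1 n` is the q-factorial `[n]_q!`. -/
lemma qbinom_add_mul_qrise_one : ∀ k l : ℕ,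
    qbinom (k + l) k * qrise 1 k * qrise 1 l = qrise 1 (k + l)
  | 0, l => by rw [qbinom_zero_right, qrise_zero, zero_add, one_mul, one_mul]
  | k + 1, 0 => by rw [add_zero, qbinom_self, qrise_zero, one_mul, mul_one]
  | k + 1, l + 1 => by
    have hk := qbinom_add_mul_qrise_one k (l + 1)
    have hl := qbinom_add_mul_qrise_one (k + 1) l
    have hq := qint_add (1 + k) (1 + l)
    rw [qrise_succ 1 l] at hk
    rw [qrise_succ 1 k, show k + 1 + l = k + (l + 1) by ring] at hl
    rw [show k + 1 + (l + 1) = k + (l + 1) + 1 by ring, qbinom_succ_succ, qrise_succ 1 k,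
      qrise_succ 1 l, qrise_succ 1 (k + (l + 1)),
      show 1 + (k + (l + 1)) = 1 + k + (1 + l) by ring, hq]
    linear_combination qint (1 + k) * hk + X ^ (k + 1) * qint (1 + l) * hl

lemma qbinom_symm_add (k l : ℕ) : qbinom (k + l) k = qbinom (k + l) l := by
  apply mul_right_cancel₀ (mul_ne_zero (qrise_one_ne_zero k) (qrise_one_ne_zero l))
  have h := qbinom_add_mul_qrise_one l k
  rw [add_comm l k] at h
  linear_combination qbinom_add_mul_qrise_one k l - h

lemma qbinom_succ_succ' (n k : ℕ) :
    qbinom (n + 1) (k + 1) = X ^ (n - k) * qbinom n k + qbinom n (k + 1) := by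
  rcases lt_trichotomy k n with h | rfl | h
  · -- the first Pascal rule applied to the complementary index `l + 1`
    obtain ⟨l, rfl⟩ := Nat.exists_eq_add_of_lt h
    have e1 := qbinom_symm_add (k + 1) (l + 1)
    have e2 := qbinom_symm_add (k + 1) l
    have e3 := qbinom_symm_add k (l + 1)
    rw [show k + 1 + (l + 1) = k + l + 1 + 1 by ring] at e1
    rw [show k + 1 + l = k + l + 1 by ring] at e2
    rw [show k + (l + 1) = k + l + 1 by ring] at e3
    rw [show k + l + 1 - k = l + 1 by omega]
    linear_combination e1 + qbinom_succ_succ (k + l + 1) l - e2 - X ^ (l + 1) * e3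
  · rw [qbinom_self, qbinom_self, qbinom_eq_zero_of_lt k.lt_succ_self, Nat.sub_self]; ring
  · rw [qbinom_eq_zero_of_lt h, qbinom_eq_zero_of_lt (by omega : n < k + 1),
      qbinom_eq_zero_of_lt (by omega : n + 1 < k + 1)]; ring

lemma qbinom_mul {n k s : ℕ} (hsk : s ≤ k) :
    qbinom n k * qbinom k s = qbinom n s * qbinom (n - s) (k - s) := by
  rcases lt_or_ge n k with hnk | hkn
  · rw [qbinom_eq_zero_of_lt hnk, zero_mul]
    rcases lt_or_ge n s with hns | hsn
    · rw [qbinom_eq_zero_of_lt hns, zero_mul]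
    · rw [qbinom_eq_zero_of_lt (by omega : n - s < k - s), mul_zero]
  obtain ⟨b, rfl⟩ := Nat.exists_eq_add_of_le hsk
  obtain ⟨c, rfl⟩ := Nat.exists_eq_add_of_le hkn
  rw [show s + b + c - s = b + c by omega, Nat.add_sub_cancel_left]
  apply mul_right_cancel₀ (mul_ne_zero (mul_ne_zero (qrise_one_ne_zero s)
    (qrise_one_ne_zero b)) (qrise_one_ne_zero c))
  have h := qbinom_add_mul_qrise_one s (b + c)
  rw [← add_assoc] at h
  linear_combination qbinom (s + b + c) (s + b) * qrise 1 c * qbinom_add_mul_qrise_one s b +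
    qbinom_add_mul_qrise_one (s + b) c - qbinom (s + b + c) s * qrise 1 s *
    qbinom_add_mul_qrise_one b c - h

theorem qrise_add_eq_sum (a b N : ℕ) :
    qrise (a + b) N =
      ∑ s ∈ range (N + 1), X ^ (a * s) * qrise a (N - s) * qrise b s * qbinom N s := by
  induction N with
  | zero => simp [qrise_zero, qbinom_zero_right]
  | succ N ih =>
    set f : ℕ → ℤ[X] := fun s => X ^ (a * s) * qrise a (N + 1 - s) * qrise b s * qbinom N s
    set g : ℕ → ℤ[X] := fun s =>
      X ^ (a * (s + 1)) * X ^ (N - s) * qrise a (N - s) * qrise b (s + 1) * qbinom N s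
    have hsplit : ∀ s ∈ range (N + 1),
        X ^ (a * s) * qrise a (N - s) * qrise b s * qbinom N s * qint (a + b + N) = f s + g s := by
      intro s hs
      replace hs : s ≤ N := mem_range_succ_iff.mp hs
      simp only [f, g]
      rw [show a + b + N = a + (N - s) + (b + s) by omega, qint_add,
        show N + 1 - s = N - s + 1 by omega, qrise_succ, qrise_succ]
      ring
    have hpascal : ∀ s ∈ range (N + 1),
        X ^ (a * (s + 1)) * qrise a (N + 1 - (s + 1)) * qrise b (s + 1) * qbinom (N + 1) (s + 1)
          = g s + f (s + 1) := by
      intro s _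
      simp only [f, g, qbinom_succ_succ', Nat.add_sub_add_right]
      ring
    calc qrise (a + b) (N + 1)
        = ∑ s ∈ range (N + 1), (f s + g s) := by
          rw [qrise_succ, ih, sum_mul]
          exact sum_congr rfl hsplit
      _ = ∑ s ∈ range (N + 1 + 1), f s + ∑ s ∈ range (N + 1), g s := by
          have hlast : f (N + 1) = 0 := by
            simp only [f, qbinom_eq_zero_of_lt N.lt_succ_self, mul_zero]
          rw [sum_add_distrib, sum_range_succ f (N + 1), hlast, add_zero]
      _ = _ := by
          rw [sum_range_succ' (fun s => X ^ (a * s) * qrise a (N + 1 - s) * qrise b s *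
            qbinom (N + 1) s), sum_range_succ' f, sum_congr rfl hpascal, sum_add_distrib]
          simp only [f, qbinom_zero_right]
          ring

noncomputable def qrLahCoeff (r n i : ℕ) : ℤ[X] :=
  X ^ (r * (2 * i + r - 1)) * qrise (2 * r) (n - i) * qbinom n i

lemma qrLah_eq_sum (r n : ℕ) (k : ℤ) :
    qrLah r n k = ∑ i ∈ range (n + 1), qrLahCoeff r n i * qLah i k := rfl

lemma qrLahCoeff_eq_zero_of_lt {r n i : ℕ} (h : n < i) : qrLahCoeff r n i = 0 := by
  rw [qrLahCoeff, qbinom_eq_zero_of_lt h, mul_zero]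

lemma qrLah_eq_sum_of_le (r : ℕ) {i n : ℕ} (k : ℤ) (h : i ≤ n) :
    qrLah r i k = ∑ j ∈ range (n + 1), qrLahCoeff r i j * qLah j k := by
  rw [qrLah_eq_sum]
  refine sum_subset (range_subset_range.mpr (by omega)) fun j _ hj => ?_
  rw [qrLahCoeff_eq_zero_of_lt (by simpa using hj), zero_mul]

lemma mul_two_mul_add_sub_one_add (m r j s : ℕ) :
    m * (2 * (j + s) + m - 1) + r * (2 * j + r - 1) + 2 * m * r =
      (m + r) * (2 * j + (m + r) - 1) + 2 * m * s := by
  rcases m with _ | m <;> rcases r with _ | r <;>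
    simp only [Nat.add_succ_sub_one, ← add_assoc, add_zero] <;> ring

theorem sum_qrLahCoeff_mul_qrLahCoeff (m r n j : ℕ) :
    ∑ i ∈ range (n + 1), X ^ (2 * m * r) * qrLahCoeff m n i * qrLahCoeff r i j =
      qrLahCoeff (m + r) n j := by
  rcases lt_or_ge n j with hnj | hjn
  · rw [qrLahCoeff_eq_zero_of_lt hnj]
    refine sum_eq_zero fun i hi => ?_
    rw [qrLahCoeff_eq_zero_of_lt ((mem_range_succ_iff.mp hi).trans_lt hnj), mul_zero]
  obtain ⟨N, rfl⟩ := Nat.exists_eq_add_of_le hjn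
  have hterm : ∀ s ∈ range (N + 1),
      X ^ (2 * m * r) * qrLahCoeff m (j + N) (j + s) * qrLahCoeff r (j + s) j =
        X ^ ((m + r) * (2 * j + (m + r) - 1)) * qbinom (j + N) j *
          (X ^ (2 * m * s) * qrise (2 * m) (N - s) * qrise (2 * r) s * qbinom N s) := by
    intro s hs
    have hq := qbinom_mul (n := j + N) (k := j + s) (s := j) (by omega)
    rw [Nat.add_sub_cancel_left, Nat.add_sub_cancel_left] at hq
    have hX := congrArg (X ^ · : ℕ → ℤ[X]) (mul_two_mul_add_sub_one_add m r j s)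
    simp only [pow_add] at hX
    simp only [qrLahCoeff, Nat.add_sub_cancel_left, show j + N - (j + s) = N - s by omega]
    linear_combination X ^ (2 * m * r) * X ^ (m * (2 * (j + s) + m - 1)) *
        X ^ (r * (2 * j + r - 1)) * qrise (2 * m) (N - s) * qrise (2 * r) s * hq +
      qrise (2 * m) (N - s) * qrise (2 * r) s * qbinom (j + N) j * qbinom N s * hX
  have hlow : ∀ i ∈ range j, X ^ (2 * m * r) * qrLahCoeff m (j + N) i * qrLahCoeff r i j = 0 :=
    fun i hi => by rw [qrLahCoeff_eq_zero_of_lt (mem_range.mp hi), mul_zero]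
  rw [show j + N + 1 = j + (N + 1) by ring, sum_range_add, sum_eq_zero hlow, zero_add,
    sum_congr rfl hterm, ← mul_sum, ← qrise_add_eq_sum, qrLahCoeff, Nat.add_sub_cancel_left, mul_add]
  ring

theorem qrLah_shift (m n r : ℕ) (k : ℤ) :
    qrLah (m + r) n k =
      ∑ i ∈ range (n + 1), X ^ (m * (2 * i + 2 * r + m - 1)) * qrise (2 * m) (n - i) *
        qbinom n i * qrLah r i k := by
  have hcoeff : ∀ i, X ^ (m * (2 * i + 2 * r + m - 1)) * qrise (2 * m) (n - i) * qbinom n i =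
      X ^ (2 * m * r) * qrLahCoeff m n i := fun i => by
    rcases m with _ | m
    · simp [qrLahCoeff]
    · simp only [qrLahCoeff, Nat.add_succ_sub_one]; ring
  calc qrLah (m + r) n k
      = ∑ j ∈ range (n + 1),
          (∑ i ∈ range (n + 1), X ^ (2 * m * r) * qrLahCoeff m n i * qrLahCoeff r i j) *
            qLah j k := by
        simp_rw [sum_qrLahCoeff_mul_qrLahCoeff, qrLah_eq_sum]
    _ = ∑ i ∈ range (n + 1), X ^ (2 * m * r) * qrLahCoeff m n i *
          ∑ j ∈ range (n + 1), qrLahCoeff r i j * qLah j k := by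
        simp_rw [sum_mul, mul_sum, mul_assoc]
        exact sum_comm
    _ = _ := sum_congr rfl fun i hi => by
        rw [qrLah_eq_sum_of_le r k (mem_range_succ_iff.mp hi), hcoeff]
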